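/- arXiv:1711.00172 — 4 statements merged into one kernel-verified Lean document; each statement's English description precedes it below -/
import Mathlib

section
/- There exists a set A of nonnegative integers which is an AP₃-covering sequence and satisfies limsup_{n→∞} A(n)/√n = √15, where A(n) denotes the number of elements of A that are at most n. -/
/-- `T l` is the set of integers `u·4^l + ∑_{i<l} v_i·4^i` with `u ∈ {1,2,3,4}`
and `v_i ∈ {1,2}` for `0 ≤ i ≤ l-1`. -/
def T (l : ℕ) : Set ℕ :=
  {n | ∃ u : ℕ, (1 ≤ u ∧ u ≤ 4) ∧ ∃ v : ℕ → ℕ, (∀ i, i < l → v i = 1 ∨ v i = 2) ∧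
    n = u * 4 ^ l + ∑ i ∈ Finset.range l, v i * 4 ^ i}

/-- `A = ⋃_{l ≥ 0} T_l`. -/
def A : Set ℕ := ⋃ l : ℕ, T l

/-- The counting function of a set `S` of nonnegative integers:
the number of elements of `S` that are at most `n`. -/
noncomputable def cnt (S : Set ℕ) (n : ℕ) : ℕ := (S ∩ Set.Iic n).ncard

/-- `S` is an `AP₃`-covering sequence if there is `n₀` such that every `n > n₀`
is the last term of a 3-term arithmetic progression whose first two terms lie in `S`. -/
def AP3Covering (S : Set ℕ) : Prop :=
  ∃ n₀ : ℕ, ∀ n : ℕ, n₀ < n → ∃ a ∈ S, ∃ b ∈ S, a < b ∧ b < n ∧ a + n = 2 * b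

/-!
`A` is the closure of `{1, 2, 3, 4}` under `y ↦ 4y + 1, 4y + 2`. A progression `a', b', n'` with
`a', b' ∈ A` lifts to `4a' + v, 4b' + w, 4n' + t` with `v ∈ {1, 2}` of the parity of `t` and
`2w = v + t`, which gives the covering property by induction on `n`.

The same recursion enumerates `A` increasingly: its `(k + 4)`-th element is
`4 e + 1 + k % 2`, where `e` is its `(k / 2)`-th element. Induction gives `(k + 5)² ≤ 15 e_k + 10`
for the `k`-th element `e_k`, hence `A(n)² ≤ 15 n`, with equality at `k = 5·2^l - 5`, where
`A(n) / √n = (5·2^l - 4) / √((5·4^l - 2) / 3) → √15`.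
-/

open Filter Topology

lemma cnt_range_apply {e : ℕ → ℕ} (he : StrictMono e) (k : ℕ) :
    cnt (Set.range e) (e k) = k + 1 := by
  have : Set.range e ∩ Set.Iic (e k) = e '' Set.Iic k := by
    ext x
    simp only [Set.mem_inter_iff, Set.mem_range, Set.mem_Iic, Set.mem_image]
    constructor
    · rintro ⟨⟨j, rfl⟩, hj⟩
      exact ⟨j, he.le_iff_le.1 hj, rfl⟩
    · rintro ⟨j, hj, rfl⟩
      exact ⟨⟨j, rfl⟩, he.monotone hj⟩
  rw [cnt, this, Set.ncard_image_of_injective _ he.injective, Set.ncard_Iic_nat]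

lemma cnt_range_le_of_lt {e : ℕ → ℕ} (he : StrictMono e) {n k : ℕ} (h : n < e k) :
    cnt (Set.range e) n ≤ k := by
  have : Set.range e ∩ Set.Iic n ⊆ e '' Set.Iio k := by
    rintro _ ⟨⟨j, rfl⟩, hj⟩
    exact ⟨j, he.lt_iff_lt.1 (lt_of_le_of_lt hj h), rfl⟩
  calc cnt (Set.range e) n ≤ (e '' Set.Iio k).ncard :=
        Set.ncard_le_ncard this ((Set.finite_Iio k).image e)
    _ ≤ (Set.Iio k).ncard := Set.ncard_image_le (Set.finite_Iio k)
    _ = k := Set.ncard_Iio_nat k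

lemma cnt_range_sq_le {e : ℕ → ℕ} (he : StrictMono e) {C : ℕ}
    (hC : ∀ k, (k + 1) ^ 2 ≤ C * e k) (n : ℕ) : cnt (Set.range e) n ^ 2 ≤ C * n := by
  rcases Nat.eq_zero_or_pos (cnt (Set.range e) n) with h0 | hpos
  · simp [h0]
  obtain ⟨k, hk⟩ := Nat.exists_eq_add_of_lt hpos
  have hle : e k ≤ n := by
    by_contra! h
    have := cnt_range_le_of_lt he h
    omega
  rw [hk, zero_add]
  exact (hC k).trans (Nat.mul_le_mul_left C hle)

lemma Filter.limsup_eq_of_eventually_le_of_tendsto_comp {ι ι' β : Type*}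
    [ConditionallyCompleteLinearOrder β] [TopologicalSpace β] [OrderTopology β]
    {l : Filter ι} {l' : Filter ι'} [NeBot l'] {f : ι → β} {φ : ι' → ι} {c : β}
    (hf : ∀ᶠ x in l, f x ≤ c) (hφ : Tendsto φ l' l) (hlim : Tendsto (f ∘ φ) l' (𝓝 c)) :
    limsup f l = c := by
  have hcobdd : l.IsCoboundedUnder (· ≤ ·) f :=
    hlim.isCoboundedUnder_le.mono (map_mono hφ)
  have hbdd : l.IsBoundedUnder (· ≤ ·) f := ⟨c, hf⟩
  refine le_antisymm (limsup_le_of_le hcobdd hf) ?_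
  calc c = limsup (f ∘ φ) l' := hlim.limsup_eq.symm
    _ ≤ limsup f l := hφ.limsup_comp_le_limsup hlim.isCoboundedUnder_le hbdd

lemma mem_T_zero {x : ℕ} : x ∈ T 0 ↔ 1 ≤ x ∧ x ≤ 4 := by
  simp [T]

lemma mem_T_succ {l x : ℕ} :
    x ∈ T (l + 1) ↔ ∃ y ∈ T l, ∃ v, (v = 1 ∨ v = 2) ∧ x = 4 * y + v := by
  constructor
  · rintro ⟨u, hu, v, hv, rfl⟩
    refine ⟨u * 4 ^ l + ∑ i ∈ Finset.range l, v (i + 1) * 4 ^ i,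
      ⟨u, hu, fun i => v (i + 1), fun i hi => hv (i + 1) (by omega), rfl⟩,
      v 0, hv 0 (by omega), ?_⟩
    rw [Finset.sum_range_succ', mul_add, Finset.mul_sum]
    simp only [pow_succ]
    ring_nf
  · rintro ⟨_, ⟨u, hu, v, hv, rfl⟩, w, hw, rfl⟩
    refine ⟨u, hu, fun i => if i = 0 then w else v (i - 1), fun i hi => ?_, ?_⟩
    · rcases i with _ | i
      · simpa using hw
      · simpa using hv i (by omega)
    · rw [Finset.sum_range_succ', mul_add, Finset.mul_sum]
      simp only [pow_succ, Nat.add_sub_cancel, Nat.add_one_ne_zero, if_false, if_true]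
      ring_nf

lemma mem_A_iff {x : ℕ} :
    x ∈ A ↔ (1 ≤ x ∧ x ≤ 4) ∨ ∃ y ∈ A, ∃ v, (v = 1 ∨ v = 2) ∧ x = 4 * y + v := by
  simp only [A, Set.mem_iUnion]
  constructor
  · rintro ⟨_ | l, hx⟩
    · exact .inl (mem_T_zero.1 hx)
    · obtain ⟨y, hy, hv⟩ := mem_T_succ.1 hx
      exact .inr ⟨y, ⟨l, hy⟩, hv⟩
  · rintro (hx | ⟨y, ⟨l, hy⟩, hv⟩)
    · exact ⟨0, mem_T_zero.2 hx⟩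
    · exact ⟨l + 1, mem_T_succ.2 ⟨y, hy, hv⟩⟩

lemma four_mul_add_mem_A {y v : ℕ} (hy : y ∈ A) (hv : v = 1 ∨ v = 2) : 4 * y + v ∈ A :=
  mem_A_iff.2 (.inr ⟨y, hy, v, hv, rfl⟩)

lemma ap3Covering_A : AP3Covering A := by
  refine ⟨2, fun n hn => ?_⟩
  induction n using Nat.strong_induction_on with
  | _ n ih =>
  have small {x : ℕ} (h1 : 1 ≤ x) (h4 : x ≤ 4) : x ∈ A := mem_A_iff.2 (.inl ⟨h1, h4⟩)
  have h1 : 1 ∈ A := small le_rfl (by norm_num)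
  have h2 : 2 ∈ A := small (by norm_num) (by norm_num)
  have h3 : 3 ∈ A := small (by norm_num) (by norm_num)
  have h4 : 4 ∈ A := small (by norm_num) le_rfl
  have h5 : 5 ∈ A := four_mul_add_mem_A h1 (.inl rfl)
  have h6 : 6 ∈ A := four_mul_add_mem_A h1 (.inr rfl)
  by_cases hn12 : n < 12
  · interval_cases n
    exacts [⟨1, h1, 2, h2, by norm_num⟩, ⟨2, h2, 3, h3, by norm_num⟩, ⟨1, h1, 3, h3, by norm_num⟩,
      ⟨2, h2, 4, h4, by norm_num⟩, ⟨1, h1, 4, h4, by norm_num⟩, ⟨2, h2, 5, h5, by norm_num⟩,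
      ⟨1, h1, 5, h5, by norm_num⟩, ⟨2, h2, 6, h6, by norm_num⟩, ⟨1, h1, 6, h6, by norm_num⟩]
  obtain ⟨a, ha, b, hb, hab, hbn, hsum⟩ := ih (n / 4) (by omega) (by omega)
  refine ⟨4 * a + (2 - n % 4 % 2), four_mul_add_mem_A ha (by omega),
    4 * b + (n % 4 / 2 + 1), four_mul_add_mem_A hb (by omega), by omega, by omega, by omega⟩

def enumA : ℕ → ℕ
  | 0 => 1
  | 1 => 2
  | 2 => 3
  | 3 => 4
  | k + 4 => 4 * enumA (k / 2) + 1 + k % 2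

lemma enumA_of_lt_four {k : ℕ} (hk : k < 4) : enumA k = k + 1 := by
  interval_cases k <;> rw [enumA]

lemma enumA_add_four (k : ℕ) : enumA (k + 4) = 4 * enumA (k / 2) + 1 + k % 2 := by
  rw [enumA]

lemma enumA_two_mul_add_four (k : ℕ) : enumA (2 * k + 4) = 4 * enumA k + 1 := by
  rw [enumA_add_four, Nat.mul_div_cancel_left k two_pos, Nat.mul_mod_right]

lemma enumA_two_mul_add_five (k : ℕ) : enumA (2 * k + 5) = 4 * enumA k + 2 := by
  rw [show 2 * k + 5 = (2 * k + 1) + 4 by ring, enumA_add_four,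
    show (2 * k + 1) / 2 = k by omega, show (2 * k + 1) % 2 = 1 by omega]

lemma enumA_strictMono : StrictMono enumA := by
  refine strictMono_nat_of_lt_succ fun k => ?_
  induction k using Nat.strong_induction_on with
  | _ k ih =>
  rcases lt_or_ge k 4 with hk | hk
  · interval_cases k <;> simp [enumA]
  obtain ⟨j, hj | hj⟩ := Nat.even_or_odd' (k - 4)
  · obtain rfl : k = 2 * j + 4 := by omega
    rw [enumA_two_mul_add_four, enumA_two_mul_add_five]
    omega
  · obtain rfl : k = 2 * j + 5 := by omega
    have := ih j (by omega)
    rw [enumA_two_mul_add_five,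
      show 2 * j + 5 + 1 = 2 * (j + 1) + 4 by ring, enumA_two_mul_add_four]
    omega

lemma range_enumA : Set.range enumA = A := by
  ext x
  constructor
  · rintro ⟨k, rfl⟩
    induction k using Nat.strong_induction_on with
    | _ k ih =>
    rcases lt_or_ge k 4 with hk | hk
    · exact mem_A_iff.2 (.inl (by rw [enumA_of_lt_four hk]; omega))
    obtain ⟨k, rfl⟩ := Nat.exists_eq_add_of_le' hk
    rw [enumA_add_four, add_assoc]
    exact four_mul_add_mem_A (ih _ (by omega)) (by omega)
  · induction x using Nat.strong_induction_on with
    | _ x ih =>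
    intro hx
    rcases mem_A_iff.1 hx with ⟨h1, h4⟩ | ⟨y, hy, v, hv, rfl⟩
    · exact ⟨x - 1, by rw [enumA_of_lt_four (by omega)]; omega⟩
    · obtain ⟨k, rfl⟩ := ih _ (by omega) hy
      rcases hv with rfl | rfl
      · exact ⟨_, enumA_two_mul_add_four k⟩
      · exact ⟨_, enumA_two_mul_add_five k⟩

lemma sq_add_five_le_enumA (k : ℕ) : (k + 5) ^ 2 ≤ 15 * enumA k + 10 := by
  induction k using Nat.strong_induction_on with
  | _ k ih =>
  rcases lt_or_ge k 4 with hk | hk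
  · interval_cases k <;> simp [enumA]
  obtain ⟨j, hj | hj⟩ := Nat.even_or_odd' (k - 4)
  · obtain rfl : k = 2 * j + 4 := by omega
    have := ih j (by omega)
    rw [enumA_two_mul_add_four]
    nlinarith
  · obtain rfl : k = 2 * j + 5 := by omega
    have := ih j (by omega)
    rw [enumA_two_mul_add_five]
    nlinarith

lemma cnt_A_sq_le (n : ℕ) : cnt A n ^ 2 ≤ 15 * n := by
  rw [← range_enumA]
  refine cnt_range_sq_le enumA_strictMono (fun k => ?_) n
  have := sq_add_five_le_enumA k
  ring_nf at this ⊢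
  omega

lemma cnt_A_div_sqrt_le (n : ℕ) : (cnt A n : ℝ) / √n ≤ √15 := by
  refine div_le_of_le_mul₀ (Real.sqrt_nonneg _) (Real.sqrt_nonneg _) ?_
  rw [← Real.sqrt_mul (by norm_num), Real.le_sqrt (by positivity) (by positivity)]
  exact_mod_cast cnt_A_sq_le n

def peakA (l : ℕ) : ℕ := enumA (5 * 2 ^ l - 5)

lemma cnt_A_peakA (l : ℕ) : cnt A (peakA l) = 5 * 2 ^ l - 4 := by
  rw [peakA, ← range_enumA, cnt_range_apply enumA_strictMono]
  have := Nat.one_le_two_pow (n := l)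
  omega

lemma three_mul_peakA_add_two (l : ℕ) : 3 * peakA l + 2 = 5 * 4 ^ l := by
  induction l with
  | zero => simp [peakA, enumA]
  | succ l ih =>
    have h : 5 * 2 ^ (l + 1) - 5 = 2 * (5 * 2 ^ l - 5) + 5 := by
      have := Nat.one_le_two_pow (n := l); rw [pow_succ]; omega
    rw [peakA] at ih ⊢
    rw [h, enumA_two_mul_add_five, pow_succ]
    omega

lemma tendsto_peakA : Tendsto peakA atTop atTop := by
  refine (enumA_strictMono.comp (strictMono_nat_of_lt_succ fun l => ?_)).tendsto_atTop
  have := Nat.one_le_two_pow (n := l)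
  rw [pow_succ]
  omega

lemma sqrt_fifteen_mul_le_cnt_A_peakA_div (l : ℕ) :
    √15 * (1 - 4 / (5 * 2 ^ l)) ≤ (cnt A (peakA l) : ℝ) / √(peakA l) := by
  have hy : (1 : ℝ) ≤ 2 ^ l := one_le_pow₀ one_le_two
  have hcnt : (cnt A (peakA l) : ℝ) = 5 * 2 ^ l - 4 := by
    rw [cnt_A_peakA, Nat.cast_sub (by have := Nat.one_le_two_pow (n := l); omega)]
    push_cast; ring
  have hpeak : (peakA l : ℝ) = (5 * (2 ^ l) ^ 2 - 2) / 3 := by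
    have h4 : (4 : ℝ) ^ l = (2 ^ l) ^ 2 := by rw [← pow_mul, mul_comm, pow_mul]; norm_num
    have := congrArg (Nat.cast (R := ℝ)) (three_mul_peakA_add_two l)
    push_cast at this
    linarith
  have hsqrt : √15 * √(peakA l) ≤ 5 * 2 ^ l := by
    rw [← Real.sqrt_mul (by norm_num), Real.sqrt_le_left (by positivity), hpeak]
    nlinarith
  rw [le_div_iff₀ (Real.sqrt_pos.2 (by rw [hpeak]; nlinarith)), hcnt]
  have h0 : 0 ≤ 1 - 4 / (5 * (2 : ℝ) ^ l) := by
    rw [sub_nonneg, div_le_one (by positivity)]; linarith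
  calc √15 * (1 - 4 / (5 * 2 ^ l)) * √(peakA l)
      = (1 - 4 / (5 * 2 ^ l)) * (√15 * √(peakA l)) := by ring
    _ ≤ (1 - 4 / (5 * 2 ^ l)) * (5 * 2 ^ l) := mul_le_mul_of_nonneg_left hsqrt h0
    _ = 5 * 2 ^ l - 4 := by field_simp

lemma tendsto_cnt_A_peakA_div :
    Tendsto (fun l => (cnt A (peakA l) : ℝ) / √(peakA l)) atTop (𝓝 √15) := by
  have h : Tendsto (fun l : ℕ => √15 * (1 - 4 / (5 * 2 ^ l))) atTop (𝓝 (√15 * (1 - 0))) :=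
    (tendsto_const_nhds.sub (tendsto_const_nhds.div_atTop
      ((tendsto_pow_atTop_atTop_of_one_lt one_lt_two).const_mul_atTop (by norm_num)))).const_mul _
  rw [sub_zero, mul_one] at h
  exact tendsto_of_tendsto_of_tendsto_of_le_of_le h tendsto_const_nhds
    sqrt_fifteen_mul_le_cnt_A_peakA_div fun l => cnt_A_div_sqrt_le _

theorem stmt_0 :
    ∃ S : Set ℕ, AP3Covering S ∧
      Filter.limsup (fun n : ℕ => (cnt S n : ℝ) / Real.sqrt n) Filter.atTop
        = Real.sqrt 15 :=
  ⟨A, ap3Covering_A, limsup_eq_of_eventually_le_of_tendsto_comp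
    (Eventually.of_forall cnt_A_div_sqrt_le) tendsto_peakA tendsto_cnt_A_peakA_div⟩
end

section
/- Let n ≥ 32 be an integer, let l ≥ 2 be the integer with 2·4^l ≤ n < 2·4^{l+1}, and let A = ⋃_{l≥0} T_l where T_l = { u·4^l + Σ_{i=0}^{l-1} v_i·4^i : u ∈ {1,2,3,4}, v_i ∈ {1,2} }. Then there exist a ∈ T_l ∪ T_{l-1} and b ∈ T_l ∪ T_{l-1} with 1 ≤ a < b < n and a + n = 2b. -/
/-!
Write `n = c·4^l + ∑_{i<l} dᵢ·4^i` in base 4, with `2 ≤ c ≤ 7`. Every digit `d` is the last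
term of the progression `2 - d % 2, d / 2 + 1, d`, whose first two terms lie in `{1, 2}`. Doing
this digit by digit gives `a + n = 2b` for `a = ∑ (2 - dᵢ % 2)·4^i` and `b = ∑ (dᵢ / 2 + 1)·4^i`,
to which the leading part `c` contributes the digits `2 - c % 2 ≤ 2` and `c / 2 + 1 ≤ 4` at
position `l` when `c ≥ 3`; when `c = 2`, `a` stops below position `l` (so `a ∈ T (l - 1)`) and `b`
gets the leading digit `1`. In both cases `a < n`, which forces `a < b < n`.
-/

open Finset

def apFirst (d : ℕ) : ℕ := 2 - d % 2

def apMiddle (d : ℕ) : ℕ := d / 2 + 1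

lemma apFirst_add_self (d : ℕ) : apFirst d + d = 2 * apMiddle d := by
  unfold apFirst apMiddle; omega

lemma apFirst_eq_one_or_two (d : ℕ) : apFirst d = 1 ∨ apFirst d = 2 := by
  unfold apFirst; omega

lemma apMiddle_eq_one_or_two {d : ℕ} (hd : d < 4) : apMiddle d = 1 ∨ apMiddle d = 2 := by
  unfold apMiddle; omega

lemma sum_apFirst_add_sum {ι : Type*} (s : Finset ι) (w f : ι → ℕ) :
    ∑ i ∈ s, apFirst (w i) * f i + ∑ i ∈ s, w i * f i = 2 * ∑ i ∈ s, apMiddle (w i) * f i := by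
  rw [← sum_add_distrib, mul_sum]
  refine sum_congr rfl fun i _ => ?_
  rw [← add_mul, apFirst_add_self, mul_assoc]

lemma mod_pow_eq_sum_digits (b n L : ℕ) :
    n % b ^ L = ∑ i ∈ range L, n / b ^ i % b * b ^ i := by
  induction L with
  | zero => simp [Nat.mod_one]
  | succ k ih => rw [Nat.mod_pow_succ, ih, sum_range_succ, mul_comm (b ^ k)]

lemma sum_mul_pow_lt_pow {b : ℕ} (v : ℕ → ℕ) (k : ℕ) (hv : ∀ i < k, v i < b) :
    ∑ i ∈ range k, v i * b ^ i < b ^ k := by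
  induction k with
  | zero => simp
  | succ k ih =>
    have hsum := ih fun i hi => hv i (by omega)
    have hdigit : (v k + 1) * b ^ k ≤ b * b ^ k := Nat.mul_le_mul_right _ (hv k (by omega))
    rw [sum_range_succ, pow_succ, mul_comm _ b]
    linarith

lemma pos_of_mem_T {l m : ℕ} (h : m ∈ T l) : 0 < m := by
  obtain ⟨u, ⟨hu, -⟩, -, -, rfl⟩ := h
  have := Nat.mul_pos hu (pow_pos (by norm_num : 0 < 4) l)
  omega

lemma sum_range_succ_mem_T {k : ℕ} {v : ℕ → ℕ} (hv : ∀ i < k + 1, v i = 1 ∨ v i = 2) :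
    ∑ i ∈ range (k + 1), v i * 4 ^ i ∈ T k := by
  refine ⟨v k, ?_, v, fun i hi => hv i (by omega), by rw [sum_range_succ, add_comm]⟩
  rcases hv k (by omega) with h | h <;> omega

def lowFirst (n l : ℕ) : ℕ := ∑ i ∈ range l, apFirst (n / 4 ^ i % 4) * 4 ^ i

def lowMiddle (n l : ℕ) : ℕ := ∑ i ∈ range l, apMiddle (n / 4 ^ i % 4) * 4 ^ i

lemma lowFirst_add_mod (n l : ℕ) : lowFirst n l + n % 4 ^ l = 2 * lowMiddle n l := by
  rw [mod_pow_eq_sum_digits]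
  exact sum_apFirst_add_sum _ _ _

lemma lowFirst_lt (n l : ℕ) : lowFirst n l < 4 ^ l :=
  sum_mul_pow_lt_pow _ _ fun i _ => by
    rcases apFirst_eq_one_or_two (n / 4 ^ i % 4) with h | h <;> omega

lemma lowFirst_succ_mem_T (n k : ℕ) : lowFirst n (k + 1) ∈ T k :=
  sum_range_succ_mem_T fun _ _ => apFirst_eq_one_or_two _

lemma mul_pow_add_lowFirst_mem_T {u : ℕ} (n l : ℕ) (hu : 1 ≤ u ∧ u ≤ 4) :
    u * 4 ^ l + lowFirst n l ∈ T l :=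
  ⟨u, hu, _, fun _ _ => apFirst_eq_one_or_two _, rfl⟩

lemma mul_pow_add_lowMiddle_mem_T {u : ℕ} (n l : ℕ) (hu : 1 ≤ u ∧ u ≤ 4) :
    u * 4 ^ l + lowMiddle n l ∈ T l :=
  ⟨u, hu, _, fun _ _ => apMiddle_eq_one_or_two (Nat.mod_lt _ (by norm_num)), rfl⟩

lemma exists_ap_of_div_eq_two {n l : ℕ} (hl : 1 ≤ l) (hc : n / 4 ^ l = 2) :
    ∃ a ∈ T (l - 1), ∃ b ∈ T l, 0 < a ∧ a < n ∧ a + n = 2 * b := by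
  obtain ⟨k, rfl⟩ : ∃ k, l = k + 1 := ⟨l - 1, by omega⟩
  have ha := lowFirst_succ_mem_T n k
  refine ⟨_, ha, _, mul_pow_add_lowMiddle_mem_T n (k + 1) (u := 1) (by norm_num),
    pos_of_mem_T ha, ?_⟩
  have hn := Nat.div_add_mod' n (4 ^ (k + 1))
  have hlow := lowFirst_add_mod n (k + 1)
  have := lowFirst_lt n (k + 1)
  rw [hc] at hn
  omega

lemma exists_ap_of_three_le_div {n l : ℕ} (hc₃ : 3 ≤ n / 4 ^ l) (hc₇ : n / 4 ^ l < 8) :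
    ∃ a ∈ T l, ∃ b ∈ T l, 0 < a ∧ a < n ∧ a + n = 2 * b := by
  have hn := Nat.div_add_mod' n (4 ^ l)
  generalize n / 4 ^ l = c at hc₃ hc₇ hn
  have hca := apFirst_eq_one_or_two c
  have ha := mul_pow_add_lowFirst_mem_T n l (u := apFirst c) (by omega)
  refine ⟨_, ha, _, mul_pow_add_lowMiddle_mem_T n l (u := apMiddle c)
    (by unfold apMiddle; omega), pos_of_mem_T ha, ?_⟩
  have hlow := lowFirst_add_mod n l
  have := lowFirst_lt n l
  have h3c : 3 * 4 ^ l ≤ c * 4 ^ l := Nat.mul_le_mul_right _ hc₃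
  have hac : apFirst c * 4 ^ l ≤ 2 * 4 ^ l := Nat.mul_le_mul_right _ (by omega)
  have hmid : apFirst c * 4 ^ l + c * 4 ^ l = 2 * (apMiddle c * 4 ^ l) := by
    rw [← add_mul, apFirst_add_self, mul_assoc]
  omega

theorem stmt_3_general (n l : ℕ) (hl : 2 ≤ l)
    (h1 : 2 * 4 ^ l ≤ n) (h2 : n < 2 * 4 ^ (l + 1)) :
    ∃ a ∈ T l ∪ T (l - 1), ∃ b ∈ T l ∪ T (l - 1),
      1 ≤ a ∧ a < b ∧ b < n ∧ a + n = 2 * b := by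
  have hc₂ : 2 ≤ n / 4 ^ l := (Nat.le_div_iff_mul_le (by positivity)).2 (by linarith)
  have hc₇ : n / 4 ^ l < 8 := Nat.div_lt_of_lt_mul (by rw [pow_succ] at h2; linarith)
  obtain hc | hc : n / 4 ^ l = 2 ∨ 3 ≤ n / 4 ^ l := by omega
  · obtain ⟨a, ha, b, hb, ha₀, han, hab⟩ := exists_ap_of_div_eq_two (by omega) hc
    exact ⟨a, Or.inr ha, b, Or.inl hb, ha₀, by omega, by omega, hab⟩
  · obtain ⟨a, ha, b, hb, ha₀, han, hab⟩ := exists_ap_of_three_le_div hc hc₇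
    exact ⟨a, Or.inl ha, b, Or.inl hb, ha₀, by omega, by omega, hab⟩

theorem stmt_3 (n l : ℕ) (hn : 32 ≤ n) (hl : 2 ≤ l)
    (h1 : 2 * 4 ^ l ≤ n) (h2 : n < 2 * 4 ^ (l + 1)) :
    ∃ a ∈ T l ∪ T (l - 1), ∃ b ∈ T l ∪ T (l - 1),
      1 ≤ a ∧ a < b ∧ b < n ∧ a + n = 2 * b :=
  stmt_3_general n l hl h1 h2
end

section
/- Let T_l = { u·4^l + Σ_{i=0}^{l-1} v_i·4^i : u ∈ {1,2,3,4}, v_i ∈ {1,2} } and A = ⋃_{l≥0} T_l. For any integer l ≥ 1, any u ∈ {1,2,3,4} and any v_0, …, v_{l-1} ∈ {1,2}, setting m = u·4^l + Σ_{i=0}^{l-1} v_i·4^i, the number of elements of A that are at most m is at most (2u + 6 + v_{l-1})·2^{l-1} − 4. -/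
/-!
Elements of `A` written in base `4` have digits `1, 2` below the leading coefficient, so every
element of `T i` is smaller than every element of `T j` when `i < j`, and inside `T l` the order
is decided by the leading coefficient and the digit `v_{l-1}`. Hence `A ∩ [0, m]` consists of
`T_0, …, T_{l-1}`, of size at most `∑_{j<l} 4·2^j = 4·2^l - 4`, together with the elements of
`T_l` whose code `4u' + v'_{l-1}` is at most `4u + v_{l-1}`: there are `2(u-1) + v_{l-1}` such
codes, each followed by `2^{l-1}` choices of lower digits.
-/

open Finset

lemma sum_digits_lt_sum_digits_add_pow {j : ℕ} {v w : ℕ → ℕ}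
    (hv : ∀ i, i < j → v i = 1 ∨ v i = 2) (hw : ∀ i, i < j → w i = 1 ∨ w i = 2) :
    ∑ i ∈ range j, v i * 4 ^ i < ∑ i ∈ range j, w i * 4 ^ i + 4 ^ j := by
  induction j with
  | zero => simp
  | succ j ih =>
    have ih := ih (fun i hi => hv i (by omega)) (fun i hi => hw i (by omega))
    rw [sum_range_succ, sum_range_succ, pow_succ]
    rcases hv j (by omega) with h | h <;> rcases hw j (by omega) with h' | h' <;>
      rw [h, h'] <;> omega

lemma le_of_mul_add_le_mul_add {a b x y p : ℕ} (h : a * p + x ≤ b * p + y) (hxy : y < x + p) :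
    a ≤ b := by
  by_contra! hab
  have : (b + 1) * p ≤ a * p := Nat.mul_le_mul_right p hab
  rw [add_mul, one_mul] at this
  omega

lemma lt_of_mem_T_of_mem_T {i j n n' : ℕ} (hn : n ∈ T i) (hn' : n' ∈ T j) (hij : i < j) :
    n < n' := by
  obtain ⟨u, hu, v, hv, rfl⟩ := hn
  obtain ⟨u', hu', v', hv', rfl⟩ := hn'
  have hlower := sum_digits_lt_sum_digits_add_pow hv (fun k hk => hv' k (by omega))
  have hprefix : ∑ k ∈ range (i + 1), v' k * 4 ^ k ≤ ∑ k ∈ range j, v' k * 4 ^ k :=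
    sum_le_sum_of_subset (range_subset_range.mpr hij)
  rw [sum_range_succ] at hprefix
  have hlead : u * 4 ^ i ≤ 4 ^ (i + 1) := by rw [pow_succ']; exact Nat.mul_le_mul_right _ hu.2
  have hpow : 4 ^ (i + 1) ≤ u' * 4 ^ j :=
    (Nat.pow_le_pow_right (by norm_num) hij).trans (Nat.le_mul_of_pos_left _ hu'.1)
  have hdigit : 4 ^ i ≤ v' i * 4 ^ i :=
    Nat.le_mul_of_pos_left _ (by rcases hv' i (by omega) with h | h <;> omega)
  omega

lemma A_inter_Iic_subset {l m : ℕ} (hm : m ∈ T l) :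
    A ∩ Set.Iic m ⊆ (⋃ j ∈ range l, T j) ∪ (T l ∩ Set.Iic m) := by
  rintro n ⟨hnA, hnm⟩
  obtain ⟨j, hnj⟩ := Set.mem_iUnion.mp hnA
  rcases lt_trichotomy j l with hjl | rfl | hlj
  · exact Or.inl (Set.mem_biUnion (mem_range.mpr hjl) hnj)
  · exact Or.inr ⟨hnj, hnm⟩
  · exact absurd hnm (not_le.mpr (lt_of_mem_T_of_mem_T hm hnj hlj))

def digitSet (U : Finset ℕ) (j : ℕ) : Set ℕ :=
  {n | ∃ c ∈ U, ∃ v : ℕ → ℕ, (∀ i, i < j → v i = 1 ∨ v i = 2) ∧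
    n = c * 4 ^ j + ∑ i ∈ range j, v i * 4 ^ i}

lemma T_eq_digitSet (j : ℕ) : T j = digitSet (Icc 1 4) j := by
  ext n
  simp only [T, digitSet, Set.mem_ofPred_eq, mem_Icc]

lemma digitSet_subset_image (U : Finset ℕ) (j : ℕ) :
    digitSet U j ⊆ ↑((U ×ˢ Fintype.piFinset fun _ : Fin j => ({1, 2} : Finset ℕ)).image
      fun p : ℕ × (Fin j → ℕ) => p.1 * 4 ^ j + ∑ i, p.2 i * 4 ^ (i : ℕ)) := by
  rintro n ⟨c, hc, v, hv, rfl⟩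
  refine mem_image.mpr ⟨(c, fun i => v i), mem_product.mpr ⟨hc, ?_⟩, ?_⟩
  · simpa [Fintype.mem_piFinset] using fun i : Fin j => hv i i.2
  · simp [Finset.sum_range fun i => v i * 4 ^ i]

lemma digitSet_finite (U : Finset ℕ) (j : ℕ) : (digitSet U j).Finite :=
  (Finset.finite_toSet _).subset (digitSet_subset_image U j)

lemma T_finite (j : ℕ) : (T j).Finite := by
  rw [T_eq_digitSet]
  exact digitSet_finite _ _

lemma ncard_digitSet_le (U : Finset ℕ) (j : ℕ) : (digitSet U j).ncard ≤ #U * 2 ^ j := by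
  refine (Set.ncard_le_ncard (digitSet_subset_image U j) (Finset.finite_toSet _)).trans ?_
  rw [Set.ncard_coe_finset]
  exact card_image_le.trans_eq (by simp [card_product])

/-- The codes `4u' + w ≤ c` with `u' ≥ 1` and `w ∈ {1, 2}`. -/
def leadingCodes (c : ℕ) : Finset ℕ := (Icc 5 c).filter fun d => d % 4 = 1 ∨ d % 4 = 2

lemma card_leadingCodes {u w : ℕ} (hu : 1 ≤ u ∧ u ≤ 4) (hw : w = 1 ∨ w = 2) :
    #(leadingCodes (4 * u + w)) + 2 = 2 * u + w := by
  obtain ⟨hu1, hu4⟩ := hu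
  interval_cases u <;> rcases hw with rfl | rfl <;> rfl

lemma T_succ_inter_Iic_subset {k u m : ℕ} {v : ℕ → ℕ}
    (hv : ∀ i, i < k + 1 → v i = 1 ∨ v i = 2)
    (hm : m = u * 4 ^ (k + 1) + ∑ i ∈ range (k + 1), v i * 4 ^ i) :
    T (k + 1) ∩ Set.Iic m ⊆ digitSet (leadingCodes (4 * u + v k)) k := by
  rintro n ⟨⟨u', hu', v', hv', rfl⟩, hnm⟩
  have hsplit : ∀ (a : ℕ) (d : ℕ → ℕ),
      a * 4 ^ (k + 1) + ∑ i ∈ range (k + 1), d i * 4 ^ i =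
        (4 * a + d k) * 4 ^ k + ∑ i ∈ range k, d i * 4 ^ i := fun a d => by
    rw [sum_range_succ, pow_succ]; ring
  rw [hm, hsplit, hsplit, Set.mem_Iic] at hnm
  have hcode := le_of_mul_add_le_mul_add hnm <| sum_digits_lt_sum_digits_add_pow
    (fun i hi => hv i (by omega)) (fun i hi => hv' i (by omega))
  refine ⟨4 * u' + v' k, ?_, v', fun i hi => hv' i (by omega), hsplit u' v'⟩
  simp only [leadingCodes, mem_filter, mem_Icc]
  rcases hv' k (by omega) with h | h <;> omega

lemma cnt_A_add_four_le {k u m : ℕ} (hu : 1 ≤ u ∧ u ≤ 4) {v : ℕ → ℕ}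
    (hv : ∀ i, i < k + 1 → v i = 1 ∨ v i = 2)
    (hm : m = u * 4 ^ (k + 1) + ∑ i ∈ range (k + 1), v i * 4 ^ i) :
    cnt A m + 4 ≤ (2 * u + 6 + v k) * 2 ^ k := by
  have hmT : m ∈ T (k + 1) := ⟨u, hu, v, hv, hm⟩
  have hlow : (⋃ j ∈ range (k + 1), T j).ncard ≤ ∑ j ∈ range (k + 1), 4 * 2 ^ j :=
    (set_ncard_biUnion_le _ _).trans <| sum_le_sum fun j _ => by
      simpa [T_eq_digitSet] using ncard_digitSet_le (Icc 1 4) j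
  have htop : (T (k + 1) ∩ Set.Iic m).ncard ≤ #(leadingCodes (4 * u + v k)) * 2 ^ k :=
    (Set.ncard_le_ncard (T_succ_inter_Iic_subset hv hm)
      (digitSet_finite _ _)).trans (ncard_digitSet_le _ _)
  have hgeom : ∑ j ∈ range (k + 1), 4 * 2 ^ j + 4 = 8 * 2 ^ k := by
    rw [← mul_sum, Nat.geomSum_eq le_rfl, pow_succ]
    have := Nat.one_le_two_pow (n := k)
    omega
  have hcodes := card_leadingCodes hu (hv k (by omega))
  have hfin : ((⋃ j ∈ range (k + 1), T j) ∪ (T (k + 1) ∩ Set.Iic m)).Finite :=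
    ((range (k + 1)).finite_toSet.biUnion fun j _ => T_finite j).union
      ((Set.finite_Iic m).inter_of_right _)
  calc cnt A m + 4 ≤ (⋃ j ∈ range (k + 1), T j).ncard + (T (k + 1) ∩ Set.Iic m).ncard + 4 :=
        Nat.add_le_add_right ((Set.ncard_le_ncard (A_inter_Iic_subset hmT) hfin).trans
          (Set.ncard_union_le _ _)) 4
    _ ≤ (2 * u + 6 + v k) * 2 ^ k := by nlinarith

theorem stmt_7 (l u : ℕ) (hl : 1 ≤ l) (hu : 1 ≤ u ∧ u ≤ 4) (v : ℕ → ℕ)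
    (hv : ∀ i, i < l → v i = 1 ∨ v i = 2)
    (m : ℕ) (hm : m = u * 4 ^ l + ∑ i ∈ Finset.range l, v i * 4 ^ i) :
    (cnt A m : ℝ) ≤ (2 * (u : ℝ) + 6 + (v (l - 1) : ℝ)) * 2 ^ (l - 1) - 4 := by
  obtain ⟨k, rfl⟩ : ∃ k, l = k + 1 := ⟨l - 1, by omega⟩
  have h := cnt_A_add_four_le hu hv hm
  rw [Nat.add_sub_cancel]
  have : ((cnt A m + 4 : ℕ) : ℝ) ≤ ((2 * u + 6 + v k) * 2 ^ k : ℕ) := by exact_mod_cast h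
  push_cast at this
  linarith
end

section
/- Let T_l = { u·4^l + Σ_{i=0}^{l-1} v_i·4^i : u ∈ {1,2,3,4}, v_i ∈ {1,2} } and A = ⋃_{l≥0} T_l. Let l ≥ 1, u ∈ {1,2,3,4}, v_0, …, v_{l-1} ∈ {1,2}, and set m = u·4^l + Σ_{i=0}^{l-1} v_i·4^i. If v_i = 1 for some index 0 ≤ i ≤ l−1, then m + 4^i ∈ A and A(m + 4^i) = A(m) + 2^i, where A(n) denotes the number of elements of A that are at most n. -/
/-!
Splitting off the lowest `n + 1` base-4 digits gives `T (n + 1 + k) = 4 ^ (n + 1) * T k + D (n + 1)`,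
where `D n` is the set of sums `∑_{j<n} w_j 4^j` with `w_j ∈ {1, 2}`. Write
`m = 4 ^ (n + 1) * q + (s + 4 ^ n)` with `s ∈ D n`. The levels `T k` are ordered, so
`A ∩ (m, m + 4 ^ n]` lies in the level of `m`, and since `D (n + 1) ⊆ [4 ^ n, 3 * 4 ^ n)` its
elements share the high part `q`. They are `4 ^ (n + 1) * q + t + 4 ^ n` for `t ∈ D n` with
`t > s` and `4 ^ (n + 1) * q + t + 2 * 4 ^ n` for `t ∈ D n` with `t ≤ s`: one for each of the
`2 ^ n` elements of `D n`.
-/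

open Finset

def digitSums (n : ℕ) : Set ℕ :=
  {r | ∃ v : ℕ → ℕ, (∀ j < n, v j = 1 ∨ v j = 2) ∧ r = ∑ j ∈ range n, v j * 4 ^ j}

lemma sum_range_add_mul_pow (v : ℕ → ℕ) (n k : ℕ) :
    ∑ j ∈ range (n + k), v j * 4 ^ j
      = ∑ j ∈ range n, v j * 4 ^ j + 4 ^ n * ∑ j ∈ range k, v (n + j) * 4 ^ j := by
  rw [sum_range_add, mul_sum]
  refine congrArg _ (sum_congr rfl fun j _ => ?_)
  rw [pow_add]
  ring

lemma mem_digitSums_add {n k r : ℕ} :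
    r ∈ digitSums (n + k) ↔ ∃ s ∈ digitSums n, ∃ t ∈ digitSums k, r = s + 4 ^ n * t := by
  constructor
  · rintro ⟨v, hv, rfl⟩
    exact ⟨_, ⟨v, fun j hj => hv j (by omega), rfl⟩,
      _, ⟨fun j => v (n + j), fun j hj => hv _ (by omega), rfl⟩, sum_range_add_mul_pow v n k⟩
  · rintro ⟨_, ⟨v, hv, rfl⟩, _, ⟨w, hw, rfl⟩, rfl⟩
    refine ⟨fun j => if j < n then v j else w (j - n), fun j _ => ?_, ?_⟩
    · dsimp only
      split_ifs with h
      · exact hv j h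
      · exact hw _ (by omega)
    · rw [sum_range_add_mul_pow]
      congr 1
      · exact sum_congr rfl fun j hj => by rw [if_pos (mem_range.mp hj)]
      · exact congrArg _ (sum_congr rfl fun j _ => by simp)

lemma mem_digitSums_zero {r : ℕ} : r ∈ digitSums 0 ↔ r = 0 := by
  simp [digitSums]

lemma mem_digitSums_one {r : ℕ} : r ∈ digitSums 1 ↔ r = 1 ∨ r = 2 := by
  constructor
  · rintro ⟨v, hv, rfl⟩
    simpa using hv 0 one_pos
  · intro hr
    exact ⟨fun _ => r, fun _ _ => hr, by simp⟩

lemma mem_digitSums_succ {n r : ℕ} :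
    r ∈ digitSums (n + 1) ↔ ∃ s ∈ digitSums n, r = s + 4 ^ n ∨ r = s + 2 * 4 ^ n := by
  rw [mem_digitSums_add]
  constructor
  · rintro ⟨s, hs, t, ht, rfl⟩
    rcases mem_digitSums_one.mp ht with rfl | rfl
    · exact ⟨s, hs, .inl (by ring)⟩
    · exact ⟨s, hs, .inr (by ring)⟩
  · rintro ⟨s, hs, rfl | rfl⟩
    · exact ⟨s, hs, 1, mem_digitSums_one.mpr (.inl rfl), by ring⟩
    · exact ⟨s, hs, 2, mem_digitSums_one.mpr (.inr rfl), by ring⟩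

lemma digitSums_bounds {n r : ℕ} (hr : r ∈ digitSums n) : 4 ^ n ≤ 3 * r + 1 ∧ 3 * r + 2 ≤ 2 * 4 ^ n := by
  induction n generalizing r with
  | zero => simp [mem_digitSums_zero.mp hr]
  | succ n ih =>
    obtain ⟨s, hs, rfl | rfl⟩ := mem_digitSums_succ.mp hr <;>
    · have := ih hs
      rw [pow_succ]
      omega

lemma lt_pow_of_mem_digitSums {n r : ℕ} (hr : r ∈ digitSums n) : r < 4 ^ n := by
  have := digitSums_bounds hr
  omega

lemma ncard_digitSums (n : ℕ) : (digitSums n).ncard = 2 ^ n := by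
  induction n with
  | zero => simp [show digitSums 0 = {0} from Set.ext fun r => mem_digitSums_zero]
  | succ n ih =>
    have hsplit : digitSums (n + 1) = (· + 4 ^ n) '' digitSums n ∪ (· + 2 * 4 ^ n) '' digitSums n := by
      ext r
      simp only [mem_digitSums_succ, Set.mem_union, Set.mem_image]
      aesop
    have hfin : (digitSums n).Finite :=
      (Set.finite_Iio (4 ^ n)).subset fun r hr => lt_pow_of_mem_digitSums hr
    have hdisj : Disjoint ((· + 4 ^ n) '' digitSums n) ((· + 2 * 4 ^ n) '' digitSums n) := by
      refine Set.disjoint_left.mpr ?_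
      rintro _ ⟨s, hs, rfl⟩ ⟨t, -, hst⟩
      simp only at hst
      have := lt_pow_of_mem_digitSums hs
      omega
    rw [hsplit, Set.ncard_union_eq hdisj (hfin.image _) (hfin.image _),
      Set.ncard_image_of_injective _ (add_left_injective _),
      Set.ncard_image_of_injective _ (add_left_injective _), ih, pow_succ]
    ring

lemma digitSums_succ_inter_Ioc {n s : ℕ} (hs : s ∈ digitSums n) :
    digitSums (n + 1) ∩ Set.Ioc (s + 4 ^ n) (s + 2 * 4 ^ n)
      = (fun t => if s < t then t + 4 ^ n else t + 2 * 4 ^ n) '' digitSums n := by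
  have hs' := lt_pow_of_mem_digitSums hs
  ext r
  constructor
  · rintro ⟨hr, hlo, hhi⟩
    obtain ⟨t, ht, rfl | rfl⟩ := mem_digitSums_succ.mp hr
    · exact ⟨t, ht, if_pos (by omega)⟩
    · exact ⟨t, ht, if_neg (by omega)⟩
  · rintro ⟨t, ht, rfl⟩
    have := lt_pow_of_mem_digitSums ht
    dsimp only
    split_ifs with hst
    · exact ⟨mem_digitSums_succ.mpr ⟨t, ht, .inl rfl⟩, by omega, by omega⟩
    · exact ⟨mem_digitSums_succ.mpr ⟨t, ht, .inr rfl⟩, by omega, by omega⟩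

lemma ncard_digitSums_succ_inter_Ioc {n s : ℕ} (hs : s ∈ digitSums n) :
    (digitSums (n + 1) ∩ Set.Ioc (s + 4 ^ n) (s + 2 * 4 ^ n)).ncard = 2 ^ n := by
  rw [digitSums_succ_inter_Ioc hs, ← ncard_digitSums n]
  refine Set.InjOn.ncard_image fun t ht t' ht' htt' => ?_
  have := lt_pow_of_mem_digitSums ht
  have := lt_pow_of_mem_digitSums ht'
  split_ifs at htt' <;> omega

lemma mem_T_iff {l a : ℕ} :
    a ∈ T l ↔ ∃ u, (1 ≤ u ∧ u ≤ 4) ∧ ∃ r ∈ digitSums l, a = u * 4 ^ l + r := by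
  constructor
  · rintro ⟨u, hu, v, hv, rfl⟩
    exact ⟨u, hu, _, ⟨v, hv, rfl⟩, rfl⟩
  · rintro ⟨u, hu, _, ⟨v, hv, rfl⟩, rfl⟩
    exact ⟨u, hu, v, hv, rfl⟩

lemma mem_T_add_iff {n k a : ℕ} :
    a ∈ T (n + k) ↔ ∃ q ∈ T k, ∃ r ∈ digitSums n, a = 4 ^ n * q + r := by
  simp only [mem_T_iff, mem_digitSums_add]
  constructor
  · rintro ⟨u, hu, _, ⟨s, hs, t, ht, rfl⟩, rfl⟩
    exact ⟨_, ⟨u, hu, t, ht, rfl⟩, s, hs, by rw [pow_add]; ring⟩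
  · rintro ⟨_, ⟨u, hu, t, ht, rfl⟩, s, hs, rfl⟩
    exact ⟨u, hu, _, ⟨s, hs, t, ht, rfl⟩, by rw [pow_add]; ring⟩

-- That is, `Nat.log 4 (3 * a + 1) = k + 1`.
lemma T_bounds {k a : ℕ} (ha : a ∈ T k) : 4 ^ (k + 1) ≤ 3 * a + 1 ∧ 3 * a + 1 < 4 ^ (k + 2) := by
  obtain ⟨u, ⟨hu1, hu4⟩, r, hr, rfl⟩ := mem_T_iff.mp ha
  have := digitSums_bounds hr
  have := Nat.mul_le_mul_right (4 ^ k) hu1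
  have := Nat.mul_le_mul_right (4 ^ k) hu4
  rw [pow_succ, pow_succ, pow_succ]
  omega

lemma le_of_mem_T_of_le {k k' a b : ℕ} (ha : a ∈ T k) (hb : b ∈ T k') (hab : a ≤ b) : k ≤ k' := by
  by_contra! h
  have := T_bounds ha
  have := T_bounds hb
  have : 4 ^ (k' + 2) ≤ 4 ^ (k + 1) := Nat.pow_le_pow_right (by norm_num) (by omega)
  omega

lemma mem_T_of_mem_A {l x y a : ℕ} (hx : x ∈ T l) (hy : y ∈ T l) (ha : a ∈ A)
    (hxa : x ≤ a) (hay : a ≤ y) : a ∈ T l := by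
  obtain ⟨k, hk⟩ := Set.mem_iUnion.mp ha
  obtain rfl : k = l := le_antisymm (le_of_mem_T_of_le hk hy hay) (le_of_mem_T_of_le hx hk hxa)
  exact hk

lemma le_of_mul_add_le_mul_add_s9 {N q q' r r' : ℕ} (hr : r < N + r')
    (h : N * q' + r' ≤ N * q + r) : q' ≤ q := by
  by_contra! hq
  have := Nat.mul_le_mul_left N (Nat.succ_le_of_lt hq)
  rw [Nat.mul_succ] at this
  omega

lemma A_inter_Ioc_eq_image {n k q s : ℕ} (hq : q ∈ T k) (hs : s ∈ digitSums n) :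
    A ∩ Set.Ioc (4 ^ (n + 1) * q + (s + 4 ^ n)) (4 ^ (n + 1) * q + (s + 2 * 4 ^ n))
      = (4 ^ (n + 1) * q + ·) '' (digitSums (n + 1) ∩ Set.Ioc (s + 4 ^ n) (s + 2 * 4 ^ n)) := by
  have hmem : ∀ r ∈ digitSums (n + 1), 4 ^ (n + 1) * q + r ∈ T (n + 1 + k) :=
    fun r hr => mem_T_add_iff.mpr ⟨q, hq, r, hr, rfl⟩
  have hs' := lt_pow_of_mem_digitSums hs
  have hpow : 4 ^ (n + 1) = 4 * 4 ^ n := by ring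
  ext a
  constructor
  · rintro ⟨ha, hlo, hhi⟩
    have haT := mem_T_of_mem_A (hmem _ (mem_digitSums_succ.mpr ⟨s, hs, .inl rfl⟩))
      (hmem _ (mem_digitSums_succ.mpr ⟨s, hs, .inr rfl⟩)) ha hlo.le hhi
    obtain ⟨q', -, r, hr, rfl⟩ := mem_T_add_iff.mp haT
    have := digitSums_bounds hr
    obtain rfl : q' = q := le_antisymm
      (le_of_mul_add_le_mul_add_s9 (by omega) hhi) (le_of_mul_add_le_mul_add_s9 (by omega) hlo.le)
    exact ⟨r, ⟨hr, by omega, by omega⟩, rfl⟩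
  · rintro ⟨r, ⟨hr, hlo, hhi⟩, rfl⟩
    dsimp only
    exact ⟨Set.mem_iUnion.mpr ⟨_, hmem r hr⟩, by omega, by omega⟩

lemma cnt_eq_cnt_add_ncard_inter_Ioc (S : Set ℕ) {a b : ℕ} (hab : a ≤ b) :
    cnt S b = cnt S a + (S ∩ Set.Ioc a b).ncard := by
  have hdisj : Disjoint (S ∩ Set.Iic a) (S ∩ Set.Ioc a b) :=
    Disjoint.mono inf_le_right inf_le_right (Set.Iic_disjoint_Ioc le_rfl)
  rw [cnt, cnt, ← Set.ncard_union_eq hdisj ((Set.finite_Iic a).inter_of_right S)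
    ((Set.finite_Ioc a b).inter_of_right S), ← Set.inter_union_distrib_left,
    Set.Iic_union_Ioc_eq_Iic hab]

theorem stmt_9_general (l u : ℕ) (hu : 1 ≤ u ∧ u ≤ 4) (v : ℕ → ℕ)
    (hv : ∀ i, i < l → v i = 1 ∨ v i = 2)
    (m : ℕ) (hm : m = u * 4 ^ l + ∑ i ∈ Finset.range l, v i * 4 ^ i)
    (i : ℕ) (hi : i < l) (hvi : v i = 1) :
    m + 4 ^ i ∈ A ∧ cnt A (m + 4 ^ i) = cnt A m + 2 ^ i := by
  obtain ⟨k, rfl⟩ : ∃ k, l = i + 1 + k := ⟨l - (i + 1), by omega⟩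
  set q := u * 4 ^ k + ∑ j ∈ range k, v (i + 1 + j) * 4 ^ j
  set s := ∑ j ∈ range i, v j * 4 ^ j
  have hq : q ∈ T k := ⟨u, hu, _, fun j _ => hv _ (by omega), rfl⟩
  have hs : s ∈ digitSums i := ⟨v, fun j _ => hv j (by omega), rfl⟩
  have hm' : m = 4 ^ (i + 1) * q + (s + 4 ^ i) := by
    rw [hm, sum_range_add_mul_pow, sum_range_succ, hvi, pow_add]
    ring
  have hm4 : m + 4 ^ i = 4 ^ (i + 1) * q + (s + 2 * 4 ^ i) := by omega
  refine ⟨?_, ?_⟩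
  · rw [hm4]
    exact Set.mem_iUnion.mpr ⟨_, mem_T_add_iff.mpr
      ⟨q, hq, _, mem_digitSums_succ.mpr ⟨s, hs, .inr rfl⟩, rfl⟩⟩
  · rw [cnt_eq_cnt_add_ncard_inter_Ioc A (Nat.le_add_right m _), hm4, hm', A_inter_Ioc_eq_image hq hs,
      Set.ncard_image_of_injective _ (add_right_injective _), ncard_digitSums_succ_inter_Ioc hs]

theorem stmt_9 (l u : ℕ) (hl : 1 ≤ l) (hu : 1 ≤ u ∧ u ≤ 4) (v : ℕ → ℕ)
    (hv : ∀ i, i < l → v i = 1 ∨ v i = 2)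
    (m : ℕ) (hm : m = u * 4 ^ l + ∑ i ∈ Finset.range l, v i * 4 ^ i)
    (i : ℕ) (hi : i < l) (hvi : v i = 1) :
    m + 4 ^ i ∈ A ∧ cnt A (m + 4 ^ i) = cnt A m + 2 ^ i :=
  stmt_9_general l u hu v hv m hm i hi hvi
end
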